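/- arXiv:2602.22184 — 6 statements merged into one kernel-verified Lean document; each statement's English description precedes it below -/
import Mathlib

section
/- For parameters θ₁,...,θ_m > 0 and q₁,...,q_m ∈ (0,1), the quantities P(α₁,...,α_m) = θ₁^{α₁}⋯θ_m^{α_m} · (∑ over pairwise disjoint finite sets J₁,...,J_m ⊆ ℕ with |J_k| = α_k of ∏_{k=1}^m q_k^{∑_{j∈J_k} j}) / ∏_{j=0}^∞ (1 + ∑_{k=1}^m θ_k q_k^j) sum to 1 over all (α₁,...,α_m) ∈ ℕ^m, i.e., they define a probability mass function on ℕ^m. -/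
open scoped BigOperators

/-- The normalizing infinite product `∏_{j=0}^∞ (1 + ∑_{k=1}^m θ_k q_k^j)`. -/
noncomputable def heineDenom (m : ℕ) (θ q : Fin m → ℝ) : ℝ :=
  ∏' j : ℕ, (1 + ∑ k, θ k * q k ^ j)

/-- The sum over pairwise disjoint finite sets `J₁,…,J_m ⊆ ℕ` with `|J_k| = α_k`
of `∏_k q_k ^ (∑_{j ∈ J_k} j)`. -/
noncomputable def heineCoeff (m : ℕ) (q : Fin m → ℝ) (α : Fin m → ℕ) : ℝ :=
  ∑' J : Fin m → Finset ℕ,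
    if (∀ k, (J k).card = α k) ∧ (∀ k l, k ≠ l → Disjoint (J k) (J l)) then
      ∏ k, q k ^ (∑ j ∈ J k, j)
    else 0

/-- The multi-dimensional Heine probability mass function. -/
noncomputable def heinePMF (m : ℕ) (θ q : Fin m → ℝ) (α : Fin m → ℕ) : ℝ :=
  (∏ k, θ k ^ α k) * heineCoeff m q α / heineDenom m θ q

/-! Multiplying out `∏_j (1 + ∑_k θ_k q_k^j)` chooses, for every `j`, either `1` or one term
`θ_k q_k^j`: the summands are the finitely supported colourings `F : ℕ →₀ Fin (m + 1)`, whose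
colour classes `J_k` are pairwise disjoint and contribute `∏_k θ_k^{|J_k|} q_k^{∑ J_k}`. All terms
are nonnegative and the partial products are bounded by `exp (∑_{j,k} θ_k q_k^j)`, so the
expansion converges unconditionally and may be regrouped according to `α = (|J_1|, …, |J_m|)`.
This shows that the numerators of `heinePMF` sum to `heineDenom`, which is at least `1`. -/

open Finset Filter

section FinsuppExpansion

variable {ι M : Type*} [Zero M] [Fintype M] {f : ι → M → ℝ}

theorem sum_finsupp_prod_eq_prod_sum (hf₀ : ∀ i, f i 0 = 1) (s : Finset ι) :
    ∑ F ∈ s.finsupp (fun _ ↦ univ), F.prod f = ∏ i ∈ s, ∑ x, f i x := by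
  classical
  rw [prod_sum, Finset.finsupp, sum_map]
  refine sum_congr (by congr!) fun p _ ↦ ?_
  exact Finsupp.prod_indicator_index_eq_prod_attach _ fun i _ ↦ hf₀ i

theorem tendsto_finsupp_univ_atTop :
    Tendsto (fun s : Finset ι ↦ s.finsupp fun _ ↦ (univ : Finset M)) atTop atTop := by
  classical
  exact tendsto_atTop_atTop.2 fun E ↦ ⟨E.sup Finsupp.support, fun _ hs _ hF ↦
    mem_finsupp_iff.2 ⟨(le_sup hF).trans hs, fun _ _ ↦ mem_univ _⟩⟩

theorem summable_finsupp_prod (hf₀ : ∀ i, f i 0 = 1) (hf : ∀ i x, 0 ≤ f i x) {B : ℝ}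
    (hB : ∀ s : Finset ι, ∏ i ∈ s, ∑ x, f i x ≤ B) :
    Summable fun F : ι →₀ M ↦ F.prod f := by
  classical
  refine summable_of_sum_le (c := B) (fun F ↦ prod_nonneg fun i _ ↦ hf i (F i)) fun u ↦ ?_
  calc ∑ F ∈ u, F.prod f
      ≤ ∑ F ∈ (u.sup Finsupp.support).finsupp (fun _ ↦ univ), F.prod f :=
        sum_le_sum_of_subset_of_nonneg
          (fun F hF ↦ mem_finsupp_iff.2 ⟨le_sup hF, fun _ _ ↦ mem_univ _⟩)
          fun F _ _ ↦ prod_nonneg fun i _ ↦ hf i (F i)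
    _ ≤ B := (sum_finsupp_prod_eq_prod_sum hf₀ _).trans_le (hB _)

theorem hasProd_sum_finsupp_prod (hf₀ : ∀ i, f i 0 = 1) (hf : ∀ i x, 0 ≤ f i x) {B : ℝ}
    (hB : ∀ s : Finset ι, ∏ i ∈ s, ∑ x, f i x ≤ B) :
    HasProd (fun i ↦ ∑ x, f i x) (∑' F : ι →₀ M, F.prod f) :=
  ((summable_finsupp_prod hf₀ hf hB).hasSum.comp tendsto_finsupp_univ_atTop).congr
    fun s ↦ sum_finsupp_prod_eq_prod_sum hf₀ s

end FinsuppExpansion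

namespace Heine

variable {m : ℕ}

/-- A colouring `F : ℕ →₀ Fin (m + 1)` encodes the disjoint family `J k = F⁻¹ {k.succ}`;
colour `0` marks the integers lying in no `J k`. -/
def fibers (F : ℕ →₀ Fin (m + 1)) (k : Fin m) : Finset ℕ :=
  {j ∈ F.support | F j = k.succ}

theorem mem_fibers {F : ℕ →₀ Fin (m + 1)} {k : Fin m} {j : ℕ} :
    j ∈ fibers F k ↔ F j = k.succ := by
  simp +contextual [fibers, Fin.succ_ne_zero]

theorem fibers_injective : Function.Injective (fibers (m := m)) := by
  intro F F' h
  have key : ∀ j (k : Fin m), F j = k.succ ↔ F' j = k.succ := fun j k ↦ by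
    rw [← mem_fibers, ← mem_fibers, h]
  refine Finsupp.ext fun j ↦ ?_
  induction hF : F j using Fin.cases with
  | zero =>
    induction hF' : F' j using Fin.cases with
    | zero => rfl
    | succ k => simp [(key j k).2 hF'] at hF
  | succ k => exact ((key j k).1 hF).symm

theorem disjoint_fibers (F : ℕ →₀ Fin (m + 1)) {k l : Fin m} (hkl : k ≠ l) :
    Disjoint (fibers F k) (fibers F l) :=
  disjoint_left.2 fun _ hk hl ↦
    hkl (Fin.succ_injective _ ((mem_fibers.1 hk).symm.trans (mem_fibers.1 hl)))

theorem support_eq_biUnion_fibers (F : ℕ →₀ Fin (m + 1)) :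
    F.support = univ.biUnion (fibers F) := by
  ext j
  simp only [mem_biUnion, mem_univ, true_and, mem_fibers, Finsupp.mem_support_iff]
  exact ⟨fun h ↦ Fin.exists_succ_eq.2 h |>.imp fun _ ↦ Eq.symm,
    fun ⟨k, hk⟩ ↦ hk ▸ Fin.succ_ne_zero k⟩

theorem exists_fibers_eq (J : Fin m → Finset ℕ)
    (hJ : ∀ k l, k ≠ l → Disjoint (J k) (J l)) : ∃ F, fibers F = J := by
  classical
  let colour (j : ℕ) : Fin (m + 1) := if h : ∃ k, j ∈ J k then h.choose.succ else 0
  have colour_eq {j : ℕ} {k : Fin m} (hj : j ∈ J k) : colour j = k.succ := by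
    have hex : ∃ k, j ∈ J k := ⟨k, hj⟩
    have : hex.choose = k :=
      by_contra fun hne ↦ disjoint_left.1 (hJ _ _ hne) hex.choose_spec hj
    simp only [colour, dif_pos hex, this]
  refine ⟨Finsupp.onFinset (univ.biUnion J) colour fun j hj ↦ ?_, funext fun k ↦ ?_⟩
  · obtain ⟨k, hk⟩ : ∃ k, j ∈ J k := by_contra fun h ↦ hj (dif_neg h)
    exact mem_biUnion.2 ⟨k, mem_univ k, hk⟩
  · ext j
    rw [mem_fibers, Finsupp.onFinset_apply]
    refine ⟨fun h ↦ ?_, colour_eq⟩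
    obtain ⟨l, hl⟩ : ∃ l, j ∈ J l :=
      by_contra fun hex ↦ Fin.succ_ne_zero k (h.symm.trans (dif_neg hex))
    rwa [Fin.succ_injective _ (h.symm.trans (colour_eq hl))]

variable (θ q : Fin m → ℝ)

noncomputable def siteWeight (j : ℕ) : Fin (m + 1) → ℝ :=
  Fin.cons 1 fun k ↦ θ k * q k ^ j

theorem sum_siteWeight (j : ℕ) : ∑ x, siteWeight θ q j x = 1 + ∑ k, θ k * q k ^ j :=
  Fin.sum_cons _ _

theorem prod_siteWeight (F : ℕ →₀ Fin (m + 1)) :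
    F.prod (siteWeight θ q) = (∏ k, θ k ^ #(fibers F k)) * ∏ k, q k ^ ∑ j ∈ fibers F k, j := by
  rw [Finsupp.prod, support_eq_biUnion_fibers,
    prod_biUnion fun k _ l _ ↦ disjoint_fibers F, ← prod_mul_distrib]
  refine prod_congr rfl fun k _ ↦ ?_
  rw [prod_congr rfl fun j hj ↦ by rw [mem_fibers.1 hj, siteWeight, Fin.cons_succ],
    prod_mul_distrib, prod_const, prod_pow_eq_pow_sum]

noncomputable def pairWeight (p : (Fin m → ℕ) × (Fin m → Finset ℕ)) : ℝ :=
  (∏ k, θ k ^ p.1 k) *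
    if (∀ k, (p.2 k).card = p.1 k) ∧ (∀ k l, k ≠ l → Disjoint (p.2 k) (p.2 l)) then
      ∏ k, q k ^ (∑ j ∈ p.2 k, j)
    else 0

theorem tsum_pairWeight_mk (α : Fin m → ℕ) :
    ∑' J, pairWeight θ q (α, J) = (∏ k, θ k ^ α k) * heineCoeff m q α := by
  rw [heineCoeff, ← tsum_mul_left]
  rfl

def toPair (F : ℕ →₀ Fin (m + 1)) : (Fin m → ℕ) × (Fin m → Finset ℕ) :=
  (fun k ↦ #(fibers F k), fibers F)

theorem toPair_injective : Function.Injective (toPair (m := m)) :=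
  fun _ _ h ↦ fibers_injective (congrArg Prod.snd h)

theorem pairWeight_toPair (F : ℕ →₀ Fin (m + 1)) :
    pairWeight θ q (toPair F) = F.prod (siteWeight θ q) := by
  rw [pairWeight, toPair, if_pos ⟨fun _ ↦ rfl, fun _ _ ↦ disjoint_fibers F⟩, prod_siteWeight]

theorem support_pairWeight_subset :
    Function.support (pairWeight θ q) ⊆ Set.range (toPair (m := m)) := by
  rintro ⟨α, J⟩ hp
  by_cases hc : (∀ k, (J k).card = α k) ∧ (∀ k l, k ≠ l → Disjoint (J k) (J l))
  · obtain ⟨F, rfl⟩ := exists_fibers_eq J hc.2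
    exact ⟨F, Prod.ext (funext hc.1) rfl⟩
  · simp [pairWeight, if_neg hc] at hp

variable {θ q}

theorem siteWeight_nonneg (hθ : ∀ k, 0 ≤ θ k) (hq : ∀ k, 0 ≤ q k) (j : ℕ) (x : Fin (m + 1)) :
    0 ≤ siteWeight θ q j x := by
  induction x using Fin.cases with
  | zero => exact zero_le_one
  | succ k => exact mul_nonneg (hθ k) (pow_nonneg (hq k) j)

theorem prod_sum_siteWeight_le (hθ : ∀ k, 0 ≤ θ k) (hq₀ : ∀ k, 0 ≤ q k) (hq₁ : ∀ k, q k < 1)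
    (s : Finset ℕ) :
    ∏ j ∈ s, ∑ x, siteWeight θ q j x ≤ Real.exp (∑' j, ∑ k, θ k * q k ^ j) := by
  have hg (j : ℕ) : 0 ≤ ∑ k, θ k * q k ^ j :=
    sum_nonneg fun k _ ↦ mul_nonneg (hθ k) (pow_nonneg (hq₀ k) j)
  have hsum : Summable fun j : ℕ ↦ ∑ k, θ k * q k ^ j :=
    summable_sum fun k _ ↦ (summable_geometric_of_lt_one (hq₀ k) (hq₁ k)).mul_left (θ k)
  simp only [sum_siteWeight]
  exact (Real.prod_one_add_le_exp_sum s hg).trans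
    (Real.exp_le_exp.2 (hsum.sum_le_tsum s fun j _ ↦ hg j))

theorem summable_prod_siteWeight (hθ : ∀ k, 0 ≤ θ k) (hq₀ : ∀ k, 0 ≤ q k)
    (hq₁ : ∀ k, q k < 1) :
    Summable fun F : ℕ →₀ Fin (m + 1) ↦ F.prod (siteWeight θ q) :=
  summable_finsupp_prod (fun _ ↦ rfl) (siteWeight_nonneg hθ hq₀)
    (prod_sum_siteWeight_le hθ hq₀ hq₁)

theorem heineDenom_eq_tsum (hθ : ∀ k, 0 ≤ θ k) (hq₀ : ∀ k, 0 ≤ q k) (hq₁ : ∀ k, q k < 1) :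
    heineDenom m θ q = ∑' F : ℕ →₀ Fin (m + 1), F.prod (siteWeight θ q) := by
  have := hasProd_sum_finsupp_prod (fun _ ↦ rfl) (siteWeight_nonneg hθ hq₀)
    (prod_sum_siteWeight_le hθ hq₀ hq₁)
  simp only [sum_siteWeight] at this
  exact this.tprod_eq

theorem one_le_heineDenom (hθ : ∀ k, 0 ≤ θ k) (hq₀ : ∀ k, 0 ≤ q k) (hq₁ : ∀ k, q k < 1) :
    1 ≤ heineDenom m θ q := by
  rw [heineDenom_eq_tsum hθ hq₀ hq₁, ← Finsupp.prod_zero_index (h := siteWeight θ q)]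
  exact (summable_prod_siteWeight hθ hq₀ hq₁).le_tsum 0 fun F _ ↦
    prod_nonneg fun j _ ↦ siteWeight_nonneg hθ hq₀ j (F j)

theorem tsum_mul_heineCoeff (hθ : ∀ k, 0 ≤ θ k) (hq₀ : ∀ k, 0 ≤ q k) (hq₁ : ∀ k, q k < 1) :
    ∑' α, (∏ k, θ k ^ α k) * heineCoeff m q α = heineDenom m θ q := by
  have hsummable : Summable (pairWeight θ q) := by
    rw [← toPair_injective.summable_iff fun p hp ↦
      Function.notMem_support.1 fun h ↦ hp (support_pairWeight_subset θ q h)]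
    simpa only [Function.comp_def, pairWeight_toPair] using
      summable_prod_siteWeight hθ hq₀ hq₁
  calc ∑' α, (∏ k, θ k ^ α k) * heineCoeff m q α
      = ∑' p, pairWeight θ q p := by
        simp only [← tsum_pairWeight_mk]
        exact (hsummable.tsum_prod' hsummable.prod_factor).symm
    _ = ∑' F : ℕ →₀ Fin (m + 1), F.prod (siteWeight θ q) := by
        rw [← toPair_injective.tsum_eq (support_pairWeight_subset θ q)]
        exact tsum_congr (pairWeight_toPair θ q)
    _ = heineDenom m θ q := (heineDenom_eq_tsum hθ hq₀ hq₁).symm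

end Heine

theorem heinePMF_tsum_eq_one_general (m : ℕ) (θ q : Fin m → ℝ)
    (hθ : ∀ k, 0 < θ k) (hq : ∀ k, q k ∈ Set.Ioo (0 : ℝ) 1) :
    ∑' α : Fin m → ℕ, heinePMF m θ q α = 1 := by
  have hθ' k := (hθ k).le
  have hq₀ k := (hq k).1.le
  have hq₁ k := (hq k).2
  have hD : heineDenom m θ q ≠ 0 := (one_pos.trans_le (Heine.one_le_heineDenom hθ' hq₀ hq₁)).ne'
  simp only [heinePMF, tsum_div_const, Heine.tsum_mul_heineCoeff hθ' hq₀ hq₁, div_self hD]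

/-- The multi-dimensional Heine weights sum to 1 over `ℕ^m`. -/
theorem heinePMF_tsum_eq_one (m : ℕ) (hm : 0 < m) (θ q : Fin m → ℝ)
    (hθ : ∀ k, 0 < θ k) (hq : ∀ k, q k ∈ Set.Ioo (0 : ℝ) 1) :
    ∑' α : Fin m → ℕ, heinePMF m θ q α = 1 :=
  heinePMF_tsum_eq_one_general m θ q hθ hq
end

section
/- With Y_j and X_k as above, the joint distribution of (X₁,...,X_m) is the multi-dimensional Heine distribution: for all (α₁,...,α_m) ∈ ℕ^m, P(X₁ = α₁,...,X_m = α_m) = θ₁^{α₁}⋯θ_m^{α_m} · (∑ over pairwise disjoint J₁,...,J_m ⊆ ℕ with |J_k| = α_k of ∏_{k=1}^m q_k^{∑_{j∈J_k} j}) / ∏_{j=0}^∞ (1 + ∑_{ℓ=1}^m θ_ℓ q_ℓ^j). -/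
open scoped BigOperators
open MeasureTheory ProbabilityTheory

/-!
On the event in question the level sets `J k = {j | Y j = k + 1}` are pairwise disjoint finite
sets with `#(J k) = α k`, so the event is the countable disjoint union, over such configurations
`J`, of the events `{∀ j, Y j = labelOf J j}`. By independence and continuity from above each of
these has probability `lim_n ∏_{j<n} P(Y j = labelOf J j)`. All but finitely many factors are
`P(Y j = 0) = 1 / (1 + ∑ l, θ l * q l ^ j)`, so the limit is
`∏ k, θ k ^ α k * q k ^ (∑ j ∈ J k, j)` divided by the convergent product `heineDenom m θ q`.
-/

open Filter Topology Finset Function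

theorem ProbabilityTheory.iIndepFun.tendsto_prod_measure_preimage
    {Ω : Type*} [MeasurableSpace Ω] {μ : Measure Ω} [IsFiniteMeasure μ]
    {β : ℕ → Type*} [∀ j, MeasurableSpace (β j)] {Y : ∀ j, Ω → β j}
    (hY : iIndepFun Y μ) (hmeas : ∀ j, Measurable (Y j))
    {s : ∀ j, Set (β j)} (hs : ∀ j, MeasurableSet (s j)) :
    Tendsto (fun n => ∏ j ∈ range n, μ (Y j ⁻¹' s j)) atTop
      (𝓝 (μ (⋂ j, Y j ⁻¹' s j))) := by
  have hfin : ∀ n, ∏ j ∈ range n, μ (Y j ⁻¹' s j) = μ (⋂ j ∈ range n, Y j ⁻¹' s j) :=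
    fun n => (hY.measure_inter_preimage_eq_mul _ fun j _ => hs j).symm
  have hiInter : ⋂ j, Y j ⁻¹' s j = ⋂ n, ⋂ j ∈ range n, Y j ⁻¹' s j := by
    ext ω
    simp only [Set.mem_iInter, mem_range]
    exact ⟨fun h n j _ => h j, fun h j => h (j + 1) j j.lt_succ_self⟩
  simp_rw [hfin, hiInter]
  exact tendsto_measure_iInter_atTop
    (fun n => ((range n).measurableSet_biInter fun j _ => hmeas j (hs j)).nullMeasurableSet)
    (fun a b hab => Set.biInter_subset_biInter_left (by simpa using hab))
    ⟨0, measure_ne_top μ _⟩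

lemma ENNReal.tsum_ofReal_eq_ofReal_tsum {ι : Type*} {f : ι → ℝ} (hf : ∀ i, 0 ≤ f i)
    (h : ∑' i, ENNReal.ofReal (f i) ≠ ⊤) :
    ∑' i, ENNReal.ofReal (f i) = ENNReal.ofReal (∑' i, f i) :=
  (ENNReal.ofReal_tsum_of_nonneg hf
    ((ENNReal.summable_toReal h).congr fun i => ENNReal.toReal_ofReal (hf i))).symm

section HeineDenom

variable {m : ℕ} {θ q : Fin m → ℝ}

lemma summable_heineTerm (hq : ∀ k, |q k| < 1) : Summable fun j => ∑ k, θ k * q k ^ j :=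
  summable_sum fun k _ => (summable_geometric_of_abs_lt_one (hq k)).mul_left (θ k)

lemma tendsto_prod_range_heineDenom (hq : ∀ k, |q k| < 1) :
    Tendsto (fun n => ∏ j ∈ range n, (1 + ∑ k, θ k * q k ^ j)) atTop (𝓝 (heineDenom m θ q)) :=
  (Real.multipliable_one_add_of_summable (summable_heineTerm hq)).hasProd.tendsto_prod_nat

lemma one_add_heineTerm_pos (hθ : ∀ k, 0 ≤ θ k) (hq0 : ∀ k, 0 ≤ q k) (j : ℕ) :
    0 < 1 + ∑ k, θ k * q k ^ j :=
  add_pos_of_pos_of_nonneg one_pos (sum_nonneg fun k _ => mul_nonneg (hθ k) (pow_nonneg (hq0 k) j))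

lemma heineDenom_pos (hθ : ∀ k, 0 ≤ θ k) (hq0 : ∀ k, 0 ≤ q k) (hq1 : ∀ k, q k < 1) :
    0 < heineDenom m θ q := by
  have hq : ∀ k, |q k| < 1 := fun k => (abs_of_nonneg (hq0 k)).trans_lt (hq1 k)
  rw [heineDenom, ← Real.rexp_tsum_eq_tprod (one_add_heineTerm_pos hθ hq0)
    (Real.summable_log_one_add_of_summable (summable_heineTerm hq))]
  exact Real.exp_pos _

end HeineDenom

section Labelling

variable {m : ℕ}

noncomputable def labelOf (J : Fin m → Finset ℕ) (j : ℕ) : Fin (m + 1) :=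
  open Classical in if h : ∃ k, j ∈ J k then (Classical.choose h).succ else 0

lemma labelOf_eq_zero_iff {J : Fin m → Finset ℕ} {j : ℕ} : labelOf J j = 0 ↔ ∀ k, j ∉ J k := by
  unfold labelOf
  split_ifs with h <;> simpa using h

lemma labelOf_eq_succ_iff {J : Fin m → Finset ℕ} (hJ : Pairwise (Disjoint on J)) {j : ℕ}
    {k : Fin m} : labelOf J j = k.succ ↔ j ∈ J k := by
  unfold labelOf
  split_ifs with h
  · rw [(Fin.succ_injective _).eq_iff]
    constructor
    · rintro rfl; exact Classical.choose_spec h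
    · intro hk
      by_contra hne
      exact Finset.disjoint_left.mp (hJ hne) (Classical.choose_spec h) hk
  · exact iff_of_false (Fin.succ_ne_zero k).symm fun hk => h ⟨k, hk⟩

lemma eq_labelOf_iff {J : Fin m → Finset ℕ} (hJ : Pairwise (Disjoint on J)) (f : ℕ → Fin (m + 1)) :
    f = labelOf J ↔ ∀ k, {j | f j = k.succ} = ↑(J k) := by
  constructor
  · rintro rfl k
    ext j
    exact labelOf_eq_succ_iff hJ
  · intro hf
    funext j
    induction h : f j using Fin.cases with
    | zero =>
      refine (labelOf_eq_zero_iff.mpr fun k hk => ?_).symm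
      rw [← Finset.mem_coe, ← hf k] at hk
      exact Fin.succ_ne_zero k (hk.symm.trans h)
    | succ k =>
      have : j ∈ (J k : Set ℕ) := by rw [← hf k]; exact h
      exact ((labelOf_eq_succ_iff hJ).mpr this).symm

lemma labelOf_injective {J J' : Fin m → Finset ℕ} (hJ : Pairwise (Disjoint on J))
    (hJ' : Pairwise (Disjoint on J')) (h : labelOf J = labelOf J') : J = J' := by
  funext k
  apply Finset.coe_injective
  rw [← (eq_labelOf_iff hJ _).mp rfl k, (eq_labelOf_iff hJ' _).mp h k]

lemma prod_range_labelOf {M : Type*} [CommMonoid M] {J : Fin m → Finset ℕ}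
    (hJ : Pairwise (Disjoint on J)) {n : ℕ} (hn : ∀ k, J k ⊆ range n)
    (w : ℕ → Fin (m + 1) → M) (hw : ∀ j, w j 0 = 1) :
    ∏ j ∈ range n, w j (labelOf J j) = ∏ k, ∏ j ∈ J k, w j k.succ := by
  classical
  have hsub : univ.biUnion J ⊆ range n := Finset.biUnion_subset.mpr fun k _ => hn k
  rw [← prod_subset hsub fun j _ hj => ?_, prod_biUnion fun k _ l _ hkl => hJ hkl]
  · exact prod_congr rfl fun k _ => prod_congr rfl fun j hj => by
      rw [(labelOf_eq_succ_iff hJ).mpr hj]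
  · rw [labelOf_eq_zero_iff.mpr fun k hk => hj (mem_biUnion.mpr ⟨k, mem_univ k, hk⟩), hw]

end Labelling

section HeineConfigurations

variable {m : ℕ}

def heineConfigs (α : Fin m → ℕ) : Set (Fin m → Finset ℕ) :=
  {J | (∀ k, (J k).card = α k) ∧ ∀ k l, k ≠ l → Disjoint (J k) (J l)}

lemma pairwise_disjoint_of_mem_heineConfigs {α : Fin m → ℕ} {J : Fin m → Finset ℕ}
    (hJ : J ∈ heineConfigs α) : Pairwise (Disjoint on J) :=
  fun k l => hJ.2 k l

lemma heineCoeff_eq_tsum_heineConfigs (q : Fin m → ℝ) (α : Fin m → ℕ) :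
    heineCoeff m q α = ∑' J : heineConfigs α, ∏ k, q k ^ ∑ j ∈ (J : Fin m → Finset ℕ) k, j := by
  rw [heineCoeff, _root_.tsum_subtype (heineConfigs α) fun J => ∏ k, q k ^ ∑ j ∈ J k, j]
  exact tsum_congr fun J => by simp [Set.indicator_apply, heineConfigs]

lemma levelSets_card_eq_iff_exists_heineConfigs (α : Fin m → ℕ) (f : ℕ → Fin (m + 1)) :
    (∀ k : Fin m, {j | f j = k.succ}.Finite ∧ Nat.card {j | f j = k.succ} = α k) ↔
      ∃ J ∈ heineConfigs α, f = labelOf J := by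
  constructor
  · intro h
    have hdisj : Pairwise (Disjoint on fun k => (h k).1.toFinset) := fun k l hkl =>
      Finset.disjoint_left.mpr fun j hk hl => hkl <| Fin.succ_injective _ <| by
        simp only [Set.Finite.mem_toFinset, Set.mem_ofPred_eq] at hk hl
        rw [← hk, ← hl]
    refine ⟨fun k => (h k).1.toFinset, ⟨fun k => ?_, fun k l => @hdisj k l⟩,
      (eq_labelOf_iff hdisj f).mpr fun k => (h k).1.coe_toFinset.symm⟩
    rw [← (h k).2, Nat.card_coe_set_eq, Set.ncard_eq_toFinset_card _ (h k).1]
  · rintro ⟨J, hJ, rfl⟩ k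
    rw [(eq_labelOf_iff (pairwise_disjoint_of_mem_heineConfigs hJ) _).mp rfl k]
    exact ⟨(J k).finite_toSet, by rw [Nat.card_coe_set_eq, Set.ncard_coe_finset, hJ.1 k]⟩

theorem measure_levelSets_card_eq {Ω : Type*} [MeasurableSpace Ω] (μ : Measure Ω)
    {Y : ℕ → Ω → Fin (m + 1)} (hmeas : ∀ j, Measurable (Y j)) (α : Fin m → ℕ) :
    μ {ω | ∀ k : Fin m, {j | Y j ω = k.succ}.Finite ∧ Nat.card {j | Y j ω = k.succ} = α k} =
      ∑' J : heineConfigs α, μ (⋂ j, Y j ⁻¹' {labelOf J.1 j}) := by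
  have hevent : {ω | ∀ k : Fin m, {j | Y j ω = k.succ}.Finite ∧
      Nat.card {j | Y j ω = k.succ} = α k} = ⋃ J : heineConfigs α, ⋂ j, Y j ⁻¹' {labelOf J.1 j} := by
    ext ω
    exact (levelSets_card_eq_iff_exists_heineConfigs α _).trans (by simp [funext_iff])
  have hdisj : Pairwise (Disjoint on fun J : heineConfigs α => ⋂ j, Y j ⁻¹' {labelOf J.1 j}) :=
    fun J J' hne => Set.disjoint_left.mpr fun ω hJ hJ' => hne <| Subtype.ext <|
      labelOf_injective (pairwise_disjoint_of_mem_heineConfigs J.2)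
        (pairwise_disjoint_of_mem_heineConfigs J'.2) <| funext fun j =>
          (Set.mem_iInter.mp hJ j).symm.trans (Set.mem_iInter.mp hJ' j)
  rw [hevent, measure_iUnion hdisj fun J => MeasurableSet.iInter fun j =>
    hmeas j (measurableSet_singleton _)]

end HeineConfigurations

section HeineLaw

variable {m : ℕ} {θ q : Fin m → ℝ}

noncomputable def heineWeight (θ q : Fin m → ℝ) (j : ℕ) : Fin (m + 1) → ℝ :=
  Fin.cases 1 fun k => θ k * q k ^ j

lemma heineWeight_nonneg (hθ : ∀ k, 0 ≤ θ k) (hq0 : ∀ k, 0 ≤ q k) (j : ℕ) (v : Fin (m + 1)) :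
    0 ≤ heineWeight θ q j v :=
  Fin.cases zero_le_one (fun k => mul_nonneg (hθ k) (pow_nonneg (hq0 k) j)) v

lemma prod_range_heineWeight_labelOf {J : Fin m → Finset ℕ} (hJ : Pairwise (Disjoint on J))
    {n : ℕ} (hn : ∀ k, J k ⊆ range n) :
    ∏ j ∈ range n, heineWeight θ q j (labelOf J j) =
      ∏ k, θ k ^ (J k).card * q k ^ ∑ j ∈ J k, j := by
  rw [prod_range_labelOf hJ hn _ fun j => rfl]
  refine prod_congr rfl fun k _ => ?_
  simp only [heineWeight, Fin.cases_succ, prod_mul_distrib, prod_const]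
  rw [prod_pow_eq_pow_sum]

variable {Ω : Type*} [MeasurableSpace Ω] {μ : Measure Ω} [IsFiniteMeasure μ]
  {Y : ℕ → Ω → Fin (m + 1)}

theorem measure_iInter_preimage_labelOf (hindep : iIndepFun Y μ) (hmeas : ∀ j, Measurable (Y j))
    (hθ : ∀ k, 0 ≤ θ k) (hq0 : ∀ k, 0 ≤ q k) (hq1 : ∀ k, q k < 1)
    (hY : ∀ j v, μ (Y j ⁻¹' {v}) =
      ENNReal.ofReal (heineWeight θ q j v / (1 + ∑ l, θ l * q l ^ j)))
    {J : Fin m → Finset ℕ} (hJ : Pairwise (Disjoint on J)) :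
    μ (⋂ j, Y j ⁻¹' {labelOf J j}) =
      ENNReal.ofReal ((∏ k, θ k ^ (J k).card * q k ^ ∑ j ∈ J k, j) / heineDenom m θ q) := by
  obtain ⟨N, hN⟩ := (univ.biUnion J).exists_nat_subset_range
  have hJN : ∀ n ≥ N, ∀ k, J k ⊆ range n := fun n hn k =>
    ((subset_biUnion_of_mem J (mem_univ k)).trans hN).trans (range_subset_range.mpr hn)
  have hq : ∀ k, |q k| < 1 := fun k => (abs_of_nonneg (hq0 k)).trans_lt (hq1 k)
  have hreal : Tendsto (fun n => ∏ j ∈ range n, (heineWeight θ q j (labelOf J j) /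
      (1 + ∑ l, θ l * q l ^ j))) atTop
      (𝓝 ((∏ k, θ k ^ (J k).card * q k ^ ∑ j ∈ J k, j) / heineDenom m θ q)) := by
    refine (tendsto_const_nhds.div (tendsto_prod_range_heineDenom hq)
      (heineDenom_pos hθ hq0 hq1).ne').congr' ?_
    filter_upwards [eventually_ge_atTop N] with n hn
    rw [Pi.div_apply, prod_div_distrib, prod_range_heineWeight_labelOf hJ (hJN n hn)]
  refine tendsto_nhds_unique (hindep.tendsto_prod_measure_preimage hmeas
    fun j => measurableSet_singleton (labelOf J j)) ?_
  refine ((ENNReal.continuous_ofReal.tendsto _).comp hreal).congr fun n => ?_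
  rw [comp_apply, ENNReal.ofReal_prod_of_nonneg fun j _ =>
    div_nonneg (heineWeight_nonneg hθ hq0 j _) (one_add_heineTerm_pos hθ hq0 j).le]
  exact prod_congr rfl fun j _ => (hY j _).symm

end HeineLaw

theorem heine_joint_distribution_general
    {Ω : Type*} [MeasurableSpace Ω] (μ : Measure Ω) [IsProbabilityMeasure μ]
    (m : ℕ) (θ q : Fin m → ℝ)
    (hθ : ∀ k, 0 < θ k) (hq : ∀ k, q k ∈ Set.Ioo (0 : ℝ) 1)
    (Y : ℕ → Ω → Fin (m + 1))
    (hmeas : ∀ j, Measurable (Y j))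
    (hindep : iIndepFun Y μ)
    (hY0 : ∀ j, μ {ω | Y j ω = 0}
      = ENNReal.ofReal (1 / (1 + ∑ l, θ l * q l ^ j)))
    (hYk : ∀ j, ∀ k : Fin m, μ {ω | Y j ω = k.succ}
      = ENNReal.ofReal (θ k * q k ^ j / (1 + ∑ l, θ l * q l ^ j)))
    (α : Fin m → ℕ) :
    μ {ω | ∀ k : Fin m, ({j : ℕ | Y j ω = k.succ}).Finite ∧
        Nat.card {j : ℕ | Y j ω = k.succ} = α k}
      = ENNReal.ofReal (heinePMF m θ q α) := by
  have hθ0 : ∀ k, 0 ≤ θ k := fun k => (hθ k).le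
  have hq0 : ∀ k, 0 ≤ q k := fun k => (hq k).1.le
  have hq1 : ∀ k, q k < 1 := fun k => (hq k).2
  set g : heineConfigs α → ℝ := fun J =>
    (∏ k, θ k ^ α k) * (∏ k, q k ^ ∑ j ∈ J.1 k, j) / heineDenom m θ q
  have hg : ∀ J, 0 ≤ g J := fun J =>
    div_nonneg (mul_nonneg (prod_nonneg fun k _ => pow_nonneg (hθ0 k) _)
      (prod_nonneg fun k _ => pow_nonneg (hq0 k) _)) (heineDenom_pos hθ0 hq0 hq1).le
  have hE : ∀ J : heineConfigs α, μ (⋂ j, Y j ⁻¹' {labelOf J.1 j}) = ENNReal.ofReal (g J) :=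
    fun J => by
      rw [measure_iInter_preimage_labelOf hindep hmeas hθ0 hq0 hq1
        (fun j v => Fin.cases (hY0 j) (hYk j) v) (pairwise_disjoint_of_mem_heineConfigs J.2),
        prod_mul_distrib]
      simp only [g, J.2.1]
  have hsum := measure_levelSets_card_eq μ hmeas α
  rw [tsum_congr hE] at hsum
  rw [hsum, ENNReal.tsum_ofReal_eq_ofReal_tsum hg (hsum ▸ measure_ne_top μ _), heinePMF,
    heineCoeff_eq_tsum_heineConfigs, ← tsum_mul_left, ← tsum_div_const]

/-- With `X_k = #{j : Y_j = k}` for independent `Y_j` distributed as in the text,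
the joint distribution of `(X₁,…,X_m)` is the multi-dimensional Heine distribution. -/
theorem heine_joint_distribution
    {Ω : Type*} [MeasurableSpace Ω] (μ : Measure Ω) [IsProbabilityMeasure μ]
    (m : ℕ) (hm : 0 < m) (θ q : Fin m → ℝ)
    (hθ : ∀ k, 0 < θ k) (hq : ∀ k, q k ∈ Set.Ioo (0 : ℝ) 1)
    (Y : ℕ → Ω → Fin (m + 1))
    (hmeas : ∀ j, Measurable (Y j))
    (hindep : iIndepFun Y μ)
    (hY0 : ∀ j, μ {ω | Y j ω = 0}
      = ENNReal.ofReal (1 / (1 + ∑ l, θ l * q l ^ j)))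
    (hYk : ∀ j, ∀ k : Fin m, μ {ω | Y j ω = k.succ}
      = ENNReal.ofReal (θ k * q k ^ j / (1 + ∑ l, θ l * q l ^ j)))
    (α : Fin m → ℕ) :
    μ {ω | ∀ k : Fin m, ({j : ℕ | Y j ω = k.succ}).Finite ∧
        Nat.card {j : ℕ | Y j ω = k.succ} = α k}
      = ENNReal.ofReal (heinePMF m θ q α) :=
  heine_joint_distribution_general μ m θ q hθ hq Y hmeas hindep hY0 hYk α
end

section
/- The marginal X_k of the multi-dimensional Heine distribution He(θ₁,...,θ_m; q₁,...,q_m) with m ≥ 2 and all θ_ℓ > 0 is not equal in distribution to any one-dimensional Heine distribution He(θ_k, q_k), unless θ_ℓ = 0 for all ℓ ≠ k; in particular, its generating function ∏_{j=0}^∞ (1 + ∑_{ℓ≠k} θ_ℓ q_ℓ^j + θ_k q_k^j s)/(1 + ∑_ℓ θ_ℓ q_ℓ^j) differs from ∏_{j=0}^∞ (1 + θ_k q_k^j s)/(1 + θ_k q_k^j) whenever some θ_ℓ > 0 with ℓ ≠ k. -/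
/-!
Write `t_j = θ_k q_k^j` and `E_j = ∑_{i ≠ k} θ_i q_i^j > 0`. The `j`-th factor of the marginal is
`(1 + E_j + t_j s) / (1 + E_j + t_j) = 1 - t_j (1 - s) / (1 + E_j + t_j)`, which strictly exceeds
the Heine factor `1 - t_j (1 - s) / (1 + t_j)` since `E_j > 0`. Both products converge absolutely
(their logarithms are summable because `E` and `t` are geometric), so taking logarithms turns the
termwise strict inequality into a strict inequality of the products.
-/

open Real Finset

theorem Real.tprod_lt_tprod_of_summable_log {ι : Type*} {f g : ι → ℝ} (hf : ∀ i, 0 < f i)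
    (hfg : ∀ i, f i ≤ g i) {i : ι} (hi : f i < g i) (hfs : Summable fun i ↦ log (f i))
    (hgs : Summable fun i ↦ log (g i)) : ∏' i, f i < ∏' i, g i := by
  rw [← rexp_tsum_eq_tprod hf hfs, ← rexp_tsum_eq_tprod (fun i ↦ (hf i).trans_le (hfg i)) hgs]
  exact exp_lt_exp.2 <|
    hfs.tsum_lt_tsum (fun j ↦ log_le_log (hf j) (hfg j)) (log_lt_log (hf i) hi) hgs

theorem Real.summable_log_one_add_div_one_add {ι : Type*} {x y : ι → ℝ} (hx : ∀ i, 0 ≤ x i)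
    (hy : ∀ i, 0 ≤ y i) (hxs : Summable x) (hys : Summable y) :
    Summable fun i ↦ log ((1 + x i) / (1 + y i)) :=
  ((summable_log_one_add_of_summable hxs).sub (summable_log_one_add_of_summable hys)).congr
    fun i ↦ (log_div (by linarith [hx i]) (by linarith [hy i])).symm

theorem one_add_mul_div_one_add_lt {E t s : ℝ} (hE : 0 < E) (ht : 0 < t) (hs : s < 1) :
    (1 + t * s) / (1 + t) < (1 + (E + t * s)) / (1 + (E + t)) := by
  rw [div_lt_div_iff₀ (by linarith) (by linarith)]
  nlinarith [mul_pos hE (mul_pos ht (sub_pos.2 hs))]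

theorem heine_marginal_not_one_dim_general (m : ℕ) (θ q : Fin m → ℝ)
    (hθ : ∀ k, 0 < θ k) (hq : ∀ k, q k ∈ Set.Ioo (0 : ℝ) 1)
    (k l : Fin m) (hlk : l ≠ k) :
    ∀ s ∈ Set.Ioo (0 : ℝ) 1,
      (∏' j : ℕ,
          (1 + (∑ i ∈ Finset.univ.erase k, θ i * q i ^ j) + θ k * q k ^ j * s)
            / (1 + ∑ i, θ i * q i ^ j))
        ≠ ∏' j : ℕ, (1 + θ k * q k ^ j * s) / (1 + θ k * q k ^ j) := by
  rintro s ⟨hs0, hs1⟩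
  have hterm : ∀ i j, 0 < θ i * q i ^ j := fun i j ↦ mul_pos (hθ i) (pow_pos (hq i).1 j)
  have hgeom : ∀ i, Summable fun j : ℕ ↦ θ i * q i ^ j := fun i ↦
    (summable_geometric_of_lt_one (hq i).1.le (hq i).2).mul_left (θ i)
  set t : ℕ → ℝ := fun j ↦ θ k * q k ^ j
  set E : ℕ → ℝ := fun j ↦ ∑ i ∈ univ.erase k, θ i * q i ^ j
  have hE : ∀ j, 0 < E j := fun j ↦
    sum_pos' (fun i _ ↦ (hterm i j).le) ⟨l, mem_erase.2 ⟨hlk, mem_univ l⟩, hterm l j⟩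
  have hfactor : ∀ j, (1 + E j + t j * s) / (1 + ∑ i, θ i * q i ^ j)
      = (1 + (E j + t j * s)) / (1 + (E j + t j)) := fun j ↦ by
    rw [← add_sum_erase _ _ (mem_univ k), add_assoc, add_comm (t j)]
  have hlt : ∀ j, (1 + t j * s) / (1 + t j) < (1 + (E j + t j * s)) / (1 + (E j + t j)) :=
    fun j ↦ one_add_mul_div_one_add_lt (hE j) (hterm k j) hs1
  have ht : ∀ j, 0 ≤ t j := fun j ↦ (hterm k j).le
  have hts : ∀ j, 0 ≤ t j * s := fun j ↦ mul_nonneg (ht j) hs0.le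
  have hEs : Summable E := summable_sum fun i _ ↦ hgeom i
  have hprod_lt := tprod_lt_tprod_of_summable_log
    (fun j ↦ div_pos (by linarith [hts j]) (by linarith [ht j])) (fun j ↦ (hlt j).le) (hlt 0)
    (summable_log_one_add_div_one_add hts ht ((hgeom k).mul_right s) (hgeom k))
    (summable_log_one_add_div_one_add (fun j ↦ add_nonneg (hE j).le (hts j))
      (fun j ↦ add_nonneg (hE j).le (ht j)) (hEs.add ((hgeom k).mul_right s)) (hEs.add (hgeom k)))
  exact (tprod_congr hfactor).trans_ne hprod_lt.ne'

/-- For `m ≥ 2` with all `θ_ℓ > 0`, the generating function of the marginal `X_k`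
of the multi-dimensional Heine distribution differs from that of the
one-dimensional Heine distribution `He(θ_k, q_k)`: whenever some `θ_l > 0` with
`l ≠ k` (here all `θ` are positive), the two generating functions disagree at
every `s ∈ (0,1)`; in particular the marginal is not `He(θ_k, q_k)`. -/
theorem heine_marginal_not_one_dim (m : ℕ) (hm : 2 ≤ m) (θ q : Fin m → ℝ)
    (hθ : ∀ k, 0 < θ k) (hq : ∀ k, q k ∈ Set.Ioo (0 : ℝ) 1)
    (k l : Fin m) (hlk : l ≠ k) :
    ∀ s ∈ Set.Ioo (0 : ℝ) 1,
      (∏' j : ℕ,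
          (1 + (∑ i ∈ Finset.univ.erase k, θ i * q i ^ j) + θ k * q k ^ j * s)
            / (1 + ∑ i, θ i * q i ^ j))
        ≠ ∏' j : ℕ, (1 + θ k * q k ^ j * s) / (1 + θ k * q k ^ j) :=
  heine_marginal_not_one_dim_general m θ q hθ hq k l hlk
end

section
/- Let (X₁,...,X_m) ∼ He(θ₁,...,θ_m; q₁,...,q_m) realized via independent Y_j as above. Then for p ≠ q in {1,...,m}, Cov(X_p, X_q) = −∑_{j=0}^∞ θ_p θ_q (q_p q_q)^j/(1 + ∑_{k=1}^m θ_k q_k^j)². In particular, distinct coordinates are negatively correlated. -/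
/-!
Write `X_p = ∑ⱼ 𝟙{Y_j = p}`. Then `E[X_p X_q] = ∑_{j,k} P(Y_j = p, Y_k = q)`: the diagonal terms
vanish because `{Y_j = p}` and `{Y_j = q}` are disjoint, and the off-diagonal ones factor by
independence. Hence `E[X_p X_q] = E[X_p] E[X_q] - ∑ⱼ P(Y_j = p) P(Y_j = q)`. The computation is
done in `ℝ≥0∞`, where series can be rearranged freely, and transferred to `ℝ` at the end since
the geometric decay of `P(Y_j = p)` makes all expectations finite.
-/

open MeasureTheory ProbabilityTheory
open scoped ENNReal

lemma ENNReal.toReal_tsum_indicator_one {Ω ι : Type*} (A : ι → Set Ω) (ω : Ω) :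
    (∑' j, (A j).indicator (1 : Ω → ℝ≥0∞) ω).toReal = ∑' j, (A j).indicator (1 : Ω → ℝ) ω := by
  rw [ENNReal.tsum_toReal_eq fun j => by by_cases h : ω ∈ A j <;> simp [h]]
  congr 1 with j
  by_cases h : ω ∈ A j <;> simp [h]

section Independent

variable {Ω ι : Type*} [MeasurableSpace Ω] {μ : Measure Ω} {A B : ι → Set Ω}

lemma tsum_tsum_measure_inter_add_tsum_mul (hdisj : ∀ j, Disjoint (A j) (B j))
    (hindep : Pairwise fun j k => μ (A j ∩ B k) = μ (A j) * μ (B k)) :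
    ∑' j, ∑' k, μ (A j ∩ B k) + ∑' j, μ (A j) * μ (B j) = (∑' j, μ (A j)) * ∑' k, μ (B k) := by
  classical
  have hsplit : ∀ j k, μ (A j ∩ B k) + (if k = j then μ (A j) * μ (B j) else 0)
      = μ (A j) * μ (B k) := by
    intro j k
    rcases eq_or_ne j k with rfl | hjk
    · simp [(hdisj j).inter_eq]
    · simp [hindep hjk, hjk.symm]
  calc ∑' j, ∑' k, μ (A j ∩ B k) + ∑' j, μ (A j) * μ (B j)
      = ∑' j, ∑' k, (μ (A j ∩ B k) + if k = j then μ (A j) * μ (B j) else 0) := by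
        simp_rw [ENNReal.tsum_add, tsum_ite_eq]
    _ = (∑' j, μ (A j)) * ∑' k, μ (B k) := by
        simp_rw [hsplit, ENNReal.tsum_mul_left, ENNReal.tsum_mul_right]

end Independent

section Countable

variable {Ω ι : Type*} [MeasurableSpace Ω] {μ : Measure Ω} [Countable ι] {A B : ι → Set Ω}

lemma lintegral_tsum_indicator_one (hA : ∀ j, MeasurableSet (A j)) :
    ∫⁻ ω, ∑' j, (A j).indicator 1 ω ∂μ = ∑' j, μ (A j) := by
  rw [lintegral_tsum fun j => (measurable_one.indicator (hA j)).aemeasurable]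
  simp_rw [lintegral_indicator_one (hA _)]

lemma lintegral_tsum_indicator_one_mul_tsum_indicator_one
    (hA : ∀ j, MeasurableSet (A j)) (hB : ∀ k, MeasurableSet (B k)) :
    ∫⁻ ω, (∑' j, (A j).indicator 1 ω) * ∑' k, (B k).indicator 1 ω ∂μ
      = ∑' j, ∑' k, μ (A j ∩ B k) := by
  simp_rw [← ENNReal.tsum_mul_right, ← ENNReal.tsum_mul_left,
    ← Pi.mul_apply (f := (A _).indicator 1), ← Set.inter_indicator_one]
  rw [lintegral_tsum fun j => (Measurable.tsum fun k =>
    measurable_one.indicator ((hA j).inter (hB k))).aemeasurable]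
  simp_rw [lintegral_tsum_indicator_one fun k => (hA _).inter (hB k)]

lemma ae_tsum_indicator_one_lt_top (hA : ∀ j, MeasurableSet (A j)) (hAfin : ∑' j, μ (A j) ≠ ∞) :
    ∀ᵐ ω ∂μ, ∑' j, (A j).indicator 1 ω < ∞ :=
  ae_lt_top (Measurable.tsum fun j => measurable_one.indicator (hA j))
    (by rwa [lintegral_tsum_indicator_one hA])

lemma integral_tsum_indicator_one (hA : ∀ j, MeasurableSet (A j)) (hAfin : ∑' j, μ (A j) ≠ ∞) :
    ∫ ω, ∑' j, (A j).indicator 1 ω ∂μ = (∑' j, μ (A j)).toReal := by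
  simp_rw [← ENNReal.toReal_tsum_indicator_one]
  rw [integral_toReal (Measurable.tsum fun j => measurable_one.indicator (hA j)).aemeasurable
    (ae_tsum_indicator_one_lt_top hA hAfin), lintegral_tsum_indicator_one hA]

lemma integral_tsum_indicator_one_mul_tsum_indicator_one (hA : ∀ j, MeasurableSet (A j))
    (hB : ∀ k, MeasurableSet (B k)) (hAfin : ∑' j, μ (A j) ≠ ∞) (hBfin : ∑' k, μ (B k) ≠ ∞) :
    ∫ ω, (∑' j, (A j).indicator 1 ω) * ∑' k, (B k).indicator 1 ω ∂μ
      = (∑' j, ∑' k, μ (A j ∩ B k)).toReal := by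
  simp_rw [← ENNReal.toReal_tsum_indicator_one, ← ENNReal.toReal_mul]
  have hfin : ∀ᵐ ω ∂μ,
      (∑' j, (A j).indicator 1 ω) * ∑' k, (B k).indicator (1 : Ω → ℝ≥0∞) ω < ∞ := by
    filter_upwards [ae_tsum_indicator_one_lt_top hA hAfin, ae_tsum_indicator_one_lt_top hB hBfin]
      with ω hωA hωB using ENNReal.mul_lt_top hωA hωB
  have hmeas : Measurable fun ω =>
      (∑' j, (A j).indicator 1 ω) * ∑' k, (B k).indicator (1 : Ω → ℝ≥0∞) ω :=
    (Measurable.tsum fun j => measurable_one.indicator (hA j)).mul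
      (Measurable.tsum fun k => measurable_one.indicator (hB k))
  rw [integral_toReal hmeas.aemeasurable hfin,
    lintegral_tsum_indicator_one_mul_tsum_indicator_one hA hB]

theorem integral_tsum_indicator_one_mul_sub_mul_integral (hA : ∀ j, MeasurableSet (A j))
    (hB : ∀ k, MeasurableSet (B k)) (hAfin : ∑' j, μ (A j) ≠ ∞) (hBfin : ∑' k, μ (B k) ≠ ∞)
    (hdisj : ∀ j, Disjoint (A j) (B j))
    (hindep : Pairwise fun j k => μ (A j ∩ B k) = μ (A j) * μ (B k)) :
    ∫ ω, (∑' j, (A j).indicator 1 ω) * ∑' k, (B k).indicator 1 ω ∂μ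
      - (∫ ω, ∑' j, (A j).indicator 1 ω ∂μ) * ∫ ω, ∑' k, (B k).indicator 1 ω ∂μ
      = -∑' j, μ.real (A j) * μ.real (B j) := by
  have hkey := tsum_tsum_measure_inter_add_tsum_mul hdisj hindep
  obtain ⟨hcross, hdiag⟩ := ENNReal.add_ne_top.mp (hkey ▸ ENNReal.mul_ne_top hAfin hBfin)
  have hdiag_real : (∑' j, μ (A j) * μ (B j)).toReal = ∑' j, μ.real (A j) * μ.real (B j) := by
    rw [ENNReal.tsum_toReal_eq fun j => ENNReal.mul_ne_top
      (ne_top_of_le_ne_top hAfin (ENNReal.le_tsum j))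
      (ne_top_of_le_ne_top hBfin (ENNReal.le_tsum j))]
    simp_rw [ENNReal.toReal_mul, measureReal_def]
  rw [integral_tsum_indicator_one_mul_tsum_indicator_one hA hB hAfin hBfin,
    integral_tsum_indicator_one hA hAfin, integral_tsum_indicator_one hB hBfin, ← hdiag_real,
    ← ENNReal.toReal_mul, ← hkey, ENNReal.toReal_add hcross hdiag]
  ring

end Countable

/-- `P(Y_j = k)` in the Heine model, for the nonzero states `k`. -/
noncomputable def heineProb {κ : Type*} [Fintype κ] (θ q : κ → ℝ) (k : κ) (j : ℕ) : ℝ :=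
  θ k * q k ^ j / (1 + ∑ l, θ l * q l ^ j)

section Heine

variable {κ : Type*} [Fintype κ] {θ q : κ → ℝ}

lemma one_le_heine_denominator (hθ : ∀ k, 0 ≤ θ k) (hq : ∀ k, 0 ≤ q k) (j : ℕ) :
    1 ≤ 1 + ∑ l, θ l * q l ^ j :=
  le_add_of_nonneg_right (Finset.sum_nonneg fun l _ => mul_nonneg (hθ l) (pow_nonneg (hq l) j))

lemma heineProb_nonneg (hθ : ∀ k, 0 ≤ θ k) (hq : ∀ k, 0 ≤ q k) (k : κ) (j : ℕ) :
    0 ≤ heineProb θ q k j :=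
  div_nonneg (mul_nonneg (hθ k) (pow_nonneg (hq k) j))
    (zero_le_one.trans (one_le_heine_denominator hθ hq j))

lemma heineProb_le (hθ : ∀ k, 0 ≤ θ k) (hq : ∀ k, 0 ≤ q k) (k : κ) (j : ℕ) :
    heineProb θ q k j ≤ θ k * q k ^ j :=
  div_le_self (mul_nonneg (hθ k) (pow_nonneg (hq k) j)) (one_le_heine_denominator hθ hq j)

lemma heineProb_zero_pos (hθ : ∀ k, 0 < θ k) (hq : ∀ k, 0 ≤ q k) (k : κ) :
    0 < heineProb θ q k 0 :=
  div_pos (by simpa using hθ k)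
    (zero_lt_one.trans_le (one_le_heine_denominator (fun l => (hθ l).le) hq 0))

lemma summable_heineProb (hθ : ∀ k, 0 ≤ θ k) (hq : ∀ k, 0 ≤ q k) {k : κ} (hqk : q k < 1) :
    Summable (heineProb θ q k) :=
  .of_nonneg_of_le (heineProb_nonneg hθ hq k) (heineProb_le hθ hq k)
    ((summable_geometric_of_lt_one (hq k) hqk).mul_left (θ k))

lemma summable_heineProb_mul_heineProb (hθ : ∀ k, 0 ≤ θ k) (hq : ∀ k, 0 ≤ q k) {k k' : κ}
    (hqk : q k < 1) (hqk' : q k' < 1) :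
    Summable fun j => heineProb θ q k j * heineProb θ q k' j :=
  .of_nonneg_of_le
    (fun j => mul_nonneg (heineProb_nonneg hθ hq k j) (heineProb_nonneg hθ hq k' j))
    (fun j => mul_le_mul_of_nonneg_left
      ((summable_heineProb hθ hq hqk').le_tsum j fun i _ => heineProb_nonneg hθ hq k' i)
      (heineProb_nonneg hθ hq k j))
    ((summable_heineProb hθ hq hqk).mul_right _)

lemma heineProb_mul_heineProb (k k' : κ) (j : ℕ) :
    heineProb θ q k j * heineProb θ q k' j
      = θ k * θ k' * (q k * q k') ^ j / (1 + ∑ l, θ l * q l ^ j) ^ 2 := by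
  rw [heineProb, heineProb, div_mul_div_comm, mul_pow]
  ring

end Heine

theorem heine_marginal_covariance_general
    {Ω : Type*} [MeasurableSpace Ω] (μ : Measure Ω)
    (m : ℕ) (θ q : Fin m → ℝ)
    (hθ : ∀ k, 0 < θ k) (hq : ∀ k, q k ∈ Set.Ioo (0 : ℝ) 1)
    (Y : ℕ → Ω → Fin (m + 1))
    (hmeas : ∀ j, Measurable (Y j))
    (hindep : iIndepFun Y μ)
    (hYk : ∀ j, ∀ k : Fin m, μ {ω | Y j ω = k.succ}
      = ENNReal.ofReal (θ k * q k ^ j / (1 + ∑ l, θ l * q l ^ j)))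
    (p p' : Fin m) (hpp' : p ≠ p') :
    (∫ ω, (∑' j : ℕ, if Y j ω = p.succ then (1 : ℝ) else 0)
          * (∑' j : ℕ, if Y j ω = p'.succ then (1 : ℝ) else 0) ∂μ)
      - (∫ ω, (∑' j : ℕ, if Y j ω = p.succ then (1 : ℝ) else 0) ∂μ)
          * (∫ ω, (∑' j : ℕ, if Y j ω = p'.succ then (1 : ℝ) else 0) ∂μ)
      = -∑' j : ℕ, θ p * θ p' * (q p * q p') ^ j / (1 + ∑ k, θ k * q k ^ j) ^ 2 ∧
    (-∑' j : ℕ, θ p * θ p' * (q p * q p') ^ j / (1 + ∑ k, θ k * q k ^ j) ^ 2 : ℝ) < 0 := by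
  have hθ0 : ∀ k, 0 ≤ θ k := fun k => (hθ k).le
  have hq0 : ∀ k, 0 ≤ q k := fun k => (hq k).1.le
  have hμ : ∀ k j, μ {ω | Y j ω = k.succ} = ENNReal.ofReal (heineProb θ q k j) :=
    fun k j => hYk j k
  have hfin : ∀ k : Fin m, ∑' j, μ {ω | Y j ω = k.succ} ≠ ∞ := fun k => by
    simp_rw [hμ, ← ENNReal.ofReal_tsum_of_nonneg (heineProb_nonneg hθ0 hq0 k)
      (summable_heineProb hθ0 hq0 (hq k).2)]
    exact ENNReal.ofReal_ne_top
  have hreal : ∀ k j, μ.real {ω | Y j ω = k.succ} = heineProb θ q k j := fun k j => by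
    rw [measureReal_def, hμ, ENNReal.toReal_ofReal (heineProb_nonneg hθ0 hq0 k j)]
  have hcov := integral_tsum_indicator_one_mul_sub_mul_integral (μ := μ)
    (A := fun j => {ω | Y j ω = p.succ}) (B := fun j => {ω | Y j ω = p'.succ})
    (fun j => hmeas j (measurableSet_singleton _)) (fun j => hmeas j (measurableSet_singleton _))
    (hfin p) (hfin p')
    (fun j => Set.disjoint_left.2 fun ω hωp hωp' =>
      hpp' (Fin.succ_injective _ (hωp.symm.trans hωp')))
    (fun j k hjk => (hindep.indepFun hjk).measure_inter_preimage_eq_mul _ _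
      (measurableSet_singleton _) (measurableSet_singleton _))
  simp only [Set.indicator_apply, Set.mem_ofPred_eq, Pi.one_apply, hreal] at hcov
  simp_rw [← heineProb_mul_heineProb]
  refine ⟨hcov, neg_neg_of_pos ?_⟩
  exact (summable_heineProb_mul_heineProb hθ0 hq0 (hq p).2 (hq p').2).tsum_pos
    (fun j => mul_nonneg (heineProb_nonneg hθ0 hq0 p j) (heineProb_nonneg hθ0 hq0 p' j)) 0
    (mul_pos (heineProb_zero_pos hθ hq0 p) (heineProb_zero_pos hθ hq0 p'))

/-- For the multi-dimensional Heine distribution realized via independent `Y_j`,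
for `p ≠ q'`,
`Cov(X_p, X_q') = −∑_{j=0}^∞ θ_p θ_q' (q_p q_q')^j/(1 + ∑_k θ_k q_k^j)²`;
in particular, distinct coordinates are negatively correlated. -/
theorem heine_marginal_covariance
    {Ω : Type*} [MeasurableSpace Ω] (μ : Measure Ω) [IsProbabilityMeasure μ]
    (m : ℕ) (hm : 0 < m) (θ q : Fin m → ℝ)
    (hθ : ∀ k, 0 < θ k) (hq : ∀ k, q k ∈ Set.Ioo (0 : ℝ) 1)
    (Y : ℕ → Ω → Fin (m + 1))
    (hmeas : ∀ j, Measurable (Y j))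
    (hindep : iIndepFun Y μ)
    (hY0 : ∀ j, μ {ω | Y j ω = 0}
      = ENNReal.ofReal (1 / (1 + ∑ l, θ l * q l ^ j)))
    (hYk : ∀ j, ∀ k : Fin m, μ {ω | Y j ω = k.succ}
      = ENNReal.ofReal (θ k * q k ^ j / (1 + ∑ l, θ l * q l ^ j)))
    (p p' : Fin m) (hpp' : p ≠ p') :
    (∫ ω, (∑' j : ℕ, if Y j ω = p.succ then (1 : ℝ) else 0)
          * (∑' j : ℕ, if Y j ω = p'.succ then (1 : ℝ) else 0) ∂μ)
      - (∫ ω, (∑' j : ℕ, if Y j ω = p.succ then (1 : ℝ) else 0) ∂μ)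
          * (∫ ω, (∑' j : ℕ, if Y j ω = p'.succ then (1 : ℝ) else 0) ∂μ)
      = -∑' j : ℕ, θ p * θ p' * (q p * q p') ^ j / (1 + ∑ k, θ k * q k ^ j) ^ 2 ∧
    (-∑' j : ℕ, θ p * θ p' * (q p * q p') ^ j / (1 + ∑ k, θ k * q k ^ j) ^ 2 : ℝ) < 0 :=
  heine_marginal_covariance_general μ m θ q hθ hq Y hmeas hindep hYk p p' hpp'
end

section
/- The joint factorial-moment/probability generating function of the multi-dimensional Heine distribution satisfies E[∏_{k=1}^m s_k^{X_k}] = ∏_{j=0}^∞ (1 + ∑_{k=1}^m s_k θ_k q_k^j)/(1 + ∑_{k=1}^m θ_k q_k^j) for s₁,...,s_m ∈ [0,1]. -/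
open MeasureTheory ProbabilityTheory Filter Finset
open scoped Topology

/-!
Write `g : Fin (m + 1) → ℝ` for `g 0 = 1`, `g k.succ = s k`. Then
`∏ k, s k ^ #{j < n | Y j = k.succ}` is the product `∏_{j < n} g (Y j)` of independent
`[0, 1]`-valued factors, whose expectation is the `n`-th partial product of the right-hand side. Since `∑ j, P(Y j = k.succ) ≤ ∑ j, θ k q k ^ j < ∞`,
Borel–Cantelli makes every `{j | Y j = k.succ}` finite almost surely (so `Nat.card` is not its junk
value `0`), the partial products are then eventually equal to the integrand, and dominated
convergence passes to the limit.
-/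

section General

variable {Ω : Type*} [MeasurableSpace Ω] {μ : Measure Ω}

theorem Finset.prod_comp_eq_prod_pow_card {ι κ M : Type*} [CommMonoid M] [Fintype κ]
    [DecidableEq κ] (s : Finset ι) (g : ι → κ) (f : κ → M) :
    ∏ i ∈ s, f (g i) = ∏ b, f b ^ #{i ∈ s | g i = b} := by
  simp_rw [← prod_const, prod_fiberwise']

theorem eventually_card_filter_range_eq_ncard {p : ℕ → Prop} [DecidablePred p]
    (hp : {j | p j}.Finite) :
    ∀ᶠ n in atTop, #{j ∈ range n | p j} = Nat.card {j | p j} := by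
  obtain ⟨B, hB⟩ := hp.bddAbove
  filter_upwards [eventually_gt_atTop B] with n hn
  have hfilter : {j ∈ range n | p j} = hp.toFinset := by
    ext j
    simp only [mem_filter, mem_range, Set.Finite.mem_toFinset, Set.mem_ofPred_eq,
      and_iff_right_iff_imp]
    exact fun hj => (hB hj).trans_lt hn
  rw [hfilter, Nat.card_coe_set_eq, Set.ncard_eq_toFinset_card _ hp]

theorem integral_comp_eq_sum_of_measure_eq_ofReal [IsFiniteMeasure μ] {α : Type*} [Fintype α]
    [MeasurableSpace α] [MeasurableSingletonClass α] {X : Ω → α} (hX : Measurable X)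
    {p : α → ℝ} (hp : ∀ v, 0 ≤ p v) (hXp : ∀ v, μ {ω | X ω = v} = ENNReal.ofReal (p v))
    (f : α → ℝ) :
    ∫ ω, f (X ω) ∂μ = ∑ v, p v * f v := by
  rw [← integral_map hX.aemeasurable (measurable_of_finite f).aestronglyMeasurable,
    integral_fintype Integrable.of_finite]
  refine sum_congr rfl fun v _ => ?_
  rw [smul_eq_mul, measureReal_def, Measure.map_apply hX (measurableSet_singleton v)]
  change (μ {ω | X ω = v}).toReal * f v = _
  rw [hXp v, ENNReal.toReal_ofReal (hp v)]

theorem ProbabilityTheory.iIndepFun.integral_finset_prod_eq_prod_integral {ι : Type*}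
    {Z : ι → Ω → ℝ} (hZ : iIndepFun Z μ) (hZm : ∀ j, AEStronglyMeasurable (Z j) μ) (t : Finset ι) :
    ∫ ω, ∏ j ∈ t, Z j ω ∂μ = ∏ j ∈ t, ∫ ω, Z j ω ∂μ := by
  rw [← prod_coe_sort]
  simp_rw [← prod_coe_sort t fun j => Z j _]
  exact (hZ.precomp (g := ((↑) : t → ι)) Subtype.val_injective
    ).integral_fun_prod_eq_prod_integral fun j => hZm j

theorem tendsto_prod_range_integral_of_iIndepFun {Z : ℕ → Ω → ℝ} (hZ : iIndepFun Z μ)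
    (hZm : ∀ j, AEStronglyMeasurable (Z j) μ) (hZ1 : ∀ j ω, |Z j ω| ≤ 1) {F : Ω → ℝ}
    (hF : ∀ᵐ ω ∂μ, Tendsto (fun n => ∏ j ∈ range n, Z j ω) atTop (𝓝 (F ω))) :
    Tendsto (fun n => ∏ j ∈ range n, ∫ ω, Z j ω ∂μ) atTop (𝓝 (∫ ω, F ω ∂μ)) := by
  have := hZ.isProbabilityMeasure
  simp_rw [← hZ.integral_finset_prod_eq_prod_integral hZm]
  refine tendsto_integral_of_dominated_convergence (fun _ => 1)
    (fun n => aestronglyMeasurable_fun_prod _ fun j _ => hZm j) (integrable_const 1)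
    (fun n => ae_of_all _ fun ω => ?_) hF
  rw [Real.norm_eq_abs, abs_prod]
  exact prod_le_one (fun j _ => abs_nonneg _) fun j _ => hZ1 j ω

theorem Real.multipliable_one_add_div_one_add {u v : ℕ → ℝ} (hu : Summable u) (hv : Summable v)
    (hv0 : ∀ j, 0 ≤ v j) : Multipliable fun j => (1 + u j) / (1 + v j) := by
  have hpos : ∀ j, 0 < 1 + v j := fun j => by linarith [hv0 j]
  have hsummable : Summable fun j => (u j - v j) / (1 + v j) := by
    refine (hu.sub hv).abs.of_norm_bounded fun j => ?_
    rw [Real.norm_eq_abs, abs_div, abs_of_pos (hpos j)]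
    exact div_le_self (abs_nonneg _) (by linarith [hv0 j])
  convert Real.multipliable_one_add_of_summable hsummable using 2 with j
  field_simp [(hpos j).ne']
  ring

end General

section Heine

variable {Ω : Type*} [MeasurableSpace Ω] {μ : Measure Ω} {m : ℕ}

theorem integral_cases_of_heine_law [IsFiniteMeasure μ] {w : Fin m → ℝ} (hw : ∀ k, 0 ≤ w k)
    {Y : Ω → Fin (m + 1)} (hY : Measurable Y)
    (hY0 : μ {ω | Y ω = 0} = ENNReal.ofReal (1 / (1 + ∑ l, w l)))
    (hYk : ∀ k : Fin m, μ {ω | Y ω = k.succ} = ENNReal.ofReal (w k / (1 + ∑ l, w l)))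
    (s : Fin m → ℝ) :
    ∫ ω, (Fin.cases 1 s (Y ω) : ℝ) ∂μ = (1 + ∑ k, s k * w k) / (1 + ∑ k, w k) := by
  have hD : 0 ≤ 1 + ∑ l, w l := add_nonneg zero_le_one (sum_nonneg fun l _ => hw l)
  rw [integral_comp_eq_sum_of_measure_eq_ofReal hY (p := Fin.cases _ fun k => w k / _)
    (Fin.cases (div_nonneg zero_le_one hD) fun k => div_nonneg (hw k) hD) (Fin.cases hY0 hYk)]
  simp only [Fin.sum_univ_succ, Fin.cases_zero, Fin.cases_succ]
  rw [add_div, sum_div]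
  congr 1
  · ring
  · exact sum_congr rfl fun k _ => by ring

theorem tendsto_prod_range_cases {M : Type*} [CommMonoid M] [TopologicalSpace M]
    (s : Fin m → M) {y : ℕ → Fin (m + 1)} (hy : ∀ k : Fin m, {j | y j = k.succ}.Finite) :
    Tendsto (fun n => ∏ j ∈ range n, (Fin.cases 1 s (y j) : M)) atTop
      (𝓝 (∏ k, s k ^ Nat.card {j | y j = k.succ})) := by
  refine tendsto_const_nhds.congr' ?_
  filter_upwards [eventually_all.2 fun k => eventually_card_filter_range_eq_ncard (hy k)]
    with n hn
  rw [prod_comp_eq_prod_pow_card, Fin.prod_univ_succ]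
  simp only [Fin.cases_zero, Fin.cases_succ, one_pow, one_mul, hn]

theorem ae_finite_setOf_eq_succ_of_heine_law {θ q : Fin m → ℝ} (hθ : ∀ k, 0 ≤ θ k)
    (hq : ∀ k, q k ∈ Set.Ico (0 : ℝ) 1) {Y : ℕ → Ω → Fin (m + 1)}
    (hYk : ∀ j, ∀ k : Fin m, μ {ω | Y j ω = k.succ}
      = ENNReal.ofReal (θ k * q k ^ j / (1 + ∑ l, θ l * q l ^ j))) :
    ∀ᵐ ω ∂μ, ∀ k : Fin m, {j | Y j ω = k.succ}.Finite := by
  refine ae_all_iff.2 fun k => ae_finite_setOfPred_mem (s := fun j => {ω | Y j ω = k.succ}) ?_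
  have hterm : ∀ j l, 0 ≤ θ l * q l ^ j := fun j l =>
    mul_nonneg (hθ l) (pow_nonneg (hq l).1 j)
  have hD : ∀ j, 1 ≤ 1 + ∑ l, θ l * q l ^ j := fun j =>
    le_add_of_nonneg_right (sum_nonneg fun l _ => hterm j l)
  have hsummable : Summable fun j => θ k * q k ^ j / (1 + ∑ l, θ l * q l ^ j) :=
    ((summable_geometric_of_lt_one (hq k).1 (hq k).2).mul_left (θ k)).of_nonneg_of_le
      (fun j => div_nonneg (hterm j k) (zero_le_one.trans (hD j)))
      fun j => div_le_self (hterm j k) (hD j)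
  simpa only [hYk] using hsummable.tsum_ofReal_ne_top

theorem multipliable_heine_factor {θ q : Fin m → ℝ} (hθ : ∀ k, 0 ≤ θ k)
    (hq : ∀ k, q k ∈ Set.Ico (0 : ℝ) 1) (s : Fin m → ℝ) :
    Multipliable fun j : ℕ => (1 + ∑ k, s k * θ k * q k ^ j) / (1 + ∑ k, θ k * q k ^ j) := by
  have hgeometric : ∀ c : Fin m → ℝ, Summable fun j : ℕ => ∑ k, c k * q k ^ j := fun c =>
    summable_sum fun k _ => (summable_geometric_of_lt_one (hq k).1 (hq k).2).mul_left (c k)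
  exact Real.multipliable_one_add_div_one_add (hgeometric _) (hgeometric θ) fun j =>
    sum_nonneg fun k _ => mul_nonneg (hθ k) (pow_nonneg (hq k).1 j)

end Heine

theorem heine_joint_pgf_general
    {Ω : Type*} [MeasurableSpace Ω] (μ : Measure Ω) [IsProbabilityMeasure μ]
    (m : ℕ) (θ q : Fin m → ℝ)
    (hθ : ∀ k, 0 < θ k) (hq : ∀ k, q k ∈ Set.Ioo (0 : ℝ) 1)
    (Y : ℕ → Ω → Fin (m + 1))
    (hmeas : ∀ j, Measurable (Y j))
    (hindep : iIndepFun Y μ)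
    (hY0 : ∀ j, μ {ω | Y j ω = 0}
      = ENNReal.ofReal (1 / (1 + ∑ l, θ l * q l ^ j)))
    (hYk : ∀ j, ∀ k : Fin m, μ {ω | Y j ω = k.succ}
      = ENNReal.ofReal (θ k * q k ^ j / (1 + ∑ l, θ l * q l ^ j)))
    (s : Fin m → ℝ) (hs : ∀ k, s k ∈ Set.Icc (0 : ℝ) 1) :
    ∫ ω, ∏ k : Fin m, s k ^ (Nat.card {j : ℕ | Y j ω = k.succ}) ∂μ
      = ∏' j : ℕ, (1 + ∑ k, s k * θ k * q k ^ j) / (1 + ∑ k, θ k * q k ^ j) := by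
  set g : Fin (m + 1) → ℝ := Fin.cases 1 s
  have hθ' k : 0 ≤ θ k := (hθ k).le
  have hq' k : q k ∈ Set.Ico (0 : ℝ) 1 := Set.Ioo_subset_Ico_self (hq k)
  have hg : ∀ v, |g v| ≤ 1 :=
    Fin.cases (by simp [g]) fun k =>
      show |s k| ≤ 1 from abs_le.2 ⟨by linarith [(hs k).1], (hs k).2⟩
  have hfactor : ∀ j, ∫ ω, g (Y j ω) ∂μ
      = (1 + ∑ k, s k * θ k * q k ^ j) / (1 + ∑ k, θ k * q k ^ j) := fun j => by
    simpa only [mul_assoc] using integral_cases_of_heine_law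
      (fun k => mul_nonneg (hθ' k) (pow_nonneg (hq' k).1 j)) (hmeas j) (hY0 j) (hYk j) s
  have hpartial := tendsto_prod_range_integral_of_iIndepFun
    (hindep.comp (fun _ => g) fun _ => measurable_of_finite g)
    (fun j => ((measurable_of_finite g).comp (hmeas j)).aestronglyMeasurable) (fun j ω => hg _)
    (by filter_upwards [ae_finite_setOf_eq_succ_of_heine_law hθ' hq' hYk] with ω hω
        exact tendsto_prod_range_cases s hω)
  simp only [Function.comp_apply, hfactor] at hpartial
  exact tendsto_nhds_unique hpartial (multipliable_heine_factor hθ' hq' s).hasProd.tendsto_prod_nat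

/-- The joint probability generating function of the multi-dimensional Heine
distribution: `E[∏_k s_k^{X_k}] = ∏_{j=0}^∞ (1 + ∑_k s_k θ_k q_k^j)/(1 + ∑_k θ_k q_k^j)`
for `s₁,…,s_m ∈ [0,1]`. -/
theorem heine_joint_pgf
    {Ω : Type*} [MeasurableSpace Ω] (μ : Measure Ω) [IsProbabilityMeasure μ]
    (m : ℕ) (hm : 0 < m) (θ q : Fin m → ℝ)
    (hθ : ∀ k, 0 < θ k) (hq : ∀ k, q k ∈ Set.Ioo (0 : ℝ) 1)
    (Y : ℕ → Ω → Fin (m + 1))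
    (hmeas : ∀ j, Measurable (Y j))
    (hindep : iIndepFun Y μ)
    (hY0 : ∀ j, μ {ω | Y j ω = 0}
      = ENNReal.ofReal (1 / (1 + ∑ l, θ l * q l ^ j)))
    (hYk : ∀ j, ∀ k : Fin m, μ {ω | Y j ω = k.succ}
      = ENNReal.ofReal (θ k * q k ^ j / (1 + ∑ l, θ l * q l ^ j)))
    (s : Fin m → ℝ) (hs : ∀ k, s k ∈ Set.Icc (0 : ℝ) 1) :
    ∫ ω, ∏ k : Fin m, s k ^ (Nat.card {j : ℕ | Y j ω = k.succ}) ∂μ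
      = ∏' j : ℕ, (1 + ∑ k, s k * θ k * q k ^ j) / (1 + ∑ k, θ k * q k ^ j) :=
  heine_joint_pgf_general μ m θ q hθ hq Y hmeas hindep hY0 hYk s hs
end

section
/- For ρ ∈ (0,1) and θ > 0 and each α ∈ ℕ, the quantity (1/(-θρ; ρ²)_∞) · ρ^{α(α-1)} (θρ)^α / (ρ²;ρ²)_α is strictly positive and these quantities sum to 1 over α ∈ ℕ; i.e., He(θρ, ρ²) is a well-defined probability distribution on ℕ. -/
open scoped BigOperators

/-- The `He(θρ, ρ²)` mass function:
`(1/(-θρ;ρ²)_∞) ⋅ ρ^{α(α-1)} (θρ)^α / (ρ²;ρ²)_α`, where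
`(-θρ;ρ²)_∞ = ∏_{i=0}^∞ (1 + θρ^{2i+1})` and `(ρ²;ρ²)_α = ∏_{i=1}^α (1 - ρ^{2i})`. -/
noncomputable def heinePdf (θ ρ : ℝ) (α : ℕ) : ℝ :=
  (1 / ∏' i : ℕ, (1 + θ * ρ ^ (2 * i + 1))) * ρ ^ (α * (α - 1)) * (θ * ρ) ^ α
    / ∏ i ∈ Finset.range α, (1 - ρ ^ (2 * (i + 1)))

/-!
With `q = ρ²` and `x = θρ`, the weights are the terms of Euler's series
`F(x) = ∑ₙ q^(n choose 2) xⁿ / (q;q)ₙ` divided by `(-x;q)_∞ = ∏ᵢ (1 + x qⁱ)`, so everything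
reduces to Euler's identity `F(x) = (-x;q)_∞`. Comparing terms gives the functional equation
`F(x) = (1 + x) F(qx)`, hence `F(x) = (∏_{i<n} (1 + x qⁱ)) F(qⁿx)`. The `k`-th term of `F(qⁿx)` is
`q^(nk)` times that of `F(x)`, so by dominated convergence `F(qⁿx) → F(0) = 1`.
-/

open Finset Filter Topology

section EulerIdentity

variable {𝕜 : Type*} [NormedField 𝕜]

noncomputable def eulerTerm (q x : 𝕜) (n : ℕ) : 𝕜 :=
  q ^ n.choose 2 * x ^ n / ∏ i ∈ range n, (1 - q ^ (i + 1))

@[simp]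
lemma eulerTerm_zero (q x : 𝕜) : eulerTerm q x 0 = 1 := by
  simp [eulerTerm]

lemma eulerTerm_succ (q x : 𝕜) (n : ℕ) :
    eulerTerm q x (n + 1) = eulerTerm q x n * (q ^ n * x / (1 - q ^ (n + 1))) := by
  simp only [eulerTerm, Nat.choose_succ_succ', Nat.choose_one_right, prod_range_succ]
  rw [div_mul_div_comm]
  ring

lemma eulerTerm_mul_left (q c x : 𝕜) (n : ℕ) :
    eulerTerm q (c * x) n = c ^ n * eulerTerm q x n := by
  simp only [eulerTerm, mul_pow]
  ring

lemma one_sub_norm_le_norm_one_sub_pow {q : 𝕜} (hq : ‖q‖ ≤ 1) (n : ℕ) :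
    1 - ‖q‖ ≤ ‖1 - q ^ (n + 1)‖ :=
  calc 1 - ‖q‖ ≤ 1 - ‖q‖ ^ (n + 1) := by
        gcongr; exact pow_le_of_le_one (norm_nonneg q) hq n.succ_ne_zero
    _ = ‖(1 : 𝕜)‖ - ‖q ^ (n + 1)‖ := by rw [norm_one, norm_pow]
    _ ≤ ‖1 - q ^ (n + 1)‖ := norm_sub_norm_le _ _

variable {q : 𝕜} (hq : ‖q‖ < 1)
include hq

lemma one_sub_pow_succ_ne_zero (n : ℕ) : 1 - q ^ (n + 1) ≠ 0 :=
  norm_pos_iff.1 <| (sub_pos.2 hq).trans_le (one_sub_norm_le_norm_one_sub_pow hq.le n)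

lemma eulerTerm_succ_eq_add (x : 𝕜) (n : ℕ) :
    eulerTerm q x (n + 1) = eulerTerm q (q * x) (n + 1) + x * eulerTerm q (q * x) n := by
  have := one_sub_pow_succ_ne_zero hq n
  rw [eulerTerm_mul_left, eulerTerm_mul_left, eulerTerm_succ]
  field_simp
  ring

lemma norm_eulerTerm_succ_le (x : 𝕜) (n : ℕ) :
    ‖eulerTerm q x (n + 1)‖ ≤ ‖q‖ ^ n * ‖x‖ / (1 - ‖q‖) * ‖eulerTerm q x n‖ := by
  rw [eulerTerm_succ, norm_mul, norm_div, norm_mul, norm_pow, mul_comm]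
  gcongr
  exact one_sub_norm_le_norm_one_sub_pow hq.le n

lemma summable_norm_eulerTerm (x : 𝕜) : Summable fun n ↦ ‖eulerTerm q x n‖ := by
  have hratio : Tendsto (fun n ↦ ‖q‖ ^ n * ‖x‖ / (1 - ‖q‖)) atTop (𝓝 0) := by
    simpa using
      ((tendsto_pow_atTop_nhds_zero_of_lt_one (norm_nonneg q) hq).mul_const ‖x‖).div_const _
  refine summable_of_ratio_norm_eventually_le (r := 1 / 2) (by norm_num) ?_
  filter_upwards [hratio.eventually_le_const (by norm_num : (0 : ℝ) < 1 / 2)] with n hn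
  simp only [norm_norm]
  exact (norm_eulerTerm_succ_le hq x n).trans (by gcongr)

variable [CompleteSpace 𝕜]

lemma tsum_eulerTerm_eq_one_add_mul (x : 𝕜) :
    ∑' n, eulerTerm q x n = (1 + x) * ∑' n, eulerTerm q (q * x) n := by
  have hs := (summable_norm_eulerTerm hq (q * x)).of_norm
  rw [(summable_norm_eulerTerm hq x).of_norm.tsum_eq_zero_add, hs.tsum_eq_zero_add,
    tsum_congr (eulerTerm_succ_eq_add hq x),
    ((summable_nat_add_iff 1).2 hs).tsum_add (hs.mul_left x), tsum_mul_left,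
    hs.tsum_eq_zero_add]
  simp only [eulerTerm_zero]
  ring

lemma tsum_eulerTerm_eq_prod_mul (x : 𝕜) (n : ℕ) :
    ∑' k, eulerTerm q x k = (∏ i ∈ range n, (1 + x * q ^ i)) * ∑' k, eulerTerm q (q ^ n * x) k := by
  induction n with
  | zero => simp
  | succ n ih =>
    rw [ih, tsum_eulerTerm_eq_one_add_mul hq, prod_range_succ, pow_succ', mul_assoc q]
    ring

lemma tendsto_tsum_eulerTerm_pow_mul (x : 𝕜) :
    Tendsto (fun n ↦ ∑' k, eulerTerm q (q ^ n * x) k) atTop (𝓝 1) := by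
  have hlim : ∑' k, (0 : 𝕜) ^ k * eulerTerm q x k = 1 := by
    rw [tsum_eq_single 0 fun k hk ↦ by simp [hk]]
    simp
  simp only [eulerTerm_mul_left]
  refine hlim ▸ tendsto_tsum_of_dominated_convergence (summable_norm_eulerTerm hq x)
    (fun k ↦ ((tendsto_pow_atTop_nhds_zero_of_norm_lt_one hq).pow k).mul_const _)
    (Eventually.of_forall fun n k ↦ ?_)
  rw [norm_mul, norm_pow, norm_pow]
  exact mul_le_of_le_one_left (norm_nonneg _) (pow_le_one₀ (by positivity)
    (pow_le_one₀ (norm_nonneg q) hq.le))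

theorem hasSum_eulerTerm (x : 𝕜) : HasSum (eulerTerm q x) (∏' i, (1 + x * q ^ i)) := by
  have hprod : Multipliable fun i ↦ 1 + x * q ^ i :=
    multipliable_one_add_of_summable <| by
      simpa [norm_mul, norm_pow] using
        (summable_geometric_of_lt_one (norm_nonneg q) hq).mul_left ‖x‖
  have hlim := hprod.tendsto_prod_tprod_nat.mul (tendsto_tsum_eulerTerm_pow_mul hq x)
  rw [mul_one] at hlim
  simp only [← tsum_eulerTerm_eq_prod_mul hq] at hlim
  exact tendsto_nhds_unique tendsto_const_nhds hlim ▸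
    (summable_norm_eulerTerm hq x).of_norm.hasSum

end EulerIdentity

lemma eulerTerm_pos {q x : ℝ} (hq₀ : 0 < q) (hq₁ : q < 1) (hx : 0 < x) (n : ℕ) :
    0 < eulerTerm q x n := by
  have hden : 0 < ∏ i ∈ range n, (1 - q ^ (i + 1)) :=
    prod_pos fun i _ ↦ sub_pos.2 (pow_lt_one₀ hq₀.le hq₁ i.succ_ne_zero)
  unfold eulerTerm
  positivity

lemma heinePdf_eq_eulerTerm_div (θ ρ : ℝ) (α : ℕ) :
    heinePdf θ ρ α = eulerTerm (ρ ^ 2) (θ * ρ) α / ∏' i : ℕ, (1 + θ * ρ * (ρ ^ 2) ^ i) := by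
  have hexp : α * (α - 1) = 2 * α.choose 2 := by
    rw [Nat.choose_two_right, mul_comm 2, Nat.div_two_mul_two_of_even (Nat.even_mul_pred_self α)]
  have hprod : ∏' i : ℕ, (1 + θ * ρ ^ (2 * i + 1)) = ∏' i : ℕ, (1 + θ * ρ * (ρ ^ 2) ^ i) :=
    tprod_congr fun i ↦ by ring
  simp only [heinePdf, eulerTerm, hexp, hprod, pow_mul]
  ring

/-- `He(θρ, ρ²)` is a well-defined probability distribution on `ℕ`: each weight
is strictly positive and the weights sum to `1`. -/
theorem heinePdf_isProbability (θ ρ : ℝ) (hθ : 0 < θ) (hρ : ρ ∈ Set.Ioo (0 : ℝ) 1) :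
    (∀ α : ℕ, 0 < heinePdf θ ρ α) ∧ ∑' α : ℕ, heinePdf θ ρ α = 1 := by
  obtain ⟨hρ₀, hρ₁⟩ := hρ
  have hq₁ : ρ ^ 2 < 1 := pow_lt_one₀ hρ₀.le hρ₁ two_ne_zero
  have hsum := hasSum_eulerTerm (by rwa [Real.norm_of_nonneg (by positivity)] : ‖ρ ^ 2‖ < 1)
    (θ * ρ)
  have hterm := eulerTerm_pos (by positivity) hq₁ (mul_pos hθ hρ₀)
  have hprod : 0 < ∏' i : ℕ, (1 + θ * ρ * (ρ ^ 2) ^ i) :=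
    hasSum_lt (f := 0) (fun α ↦ (hterm α).le) (hterm 0) hasSum_zero hsum
  simp only [heinePdf_eq_eulerTerm_div]
  exact ⟨fun α ↦ div_pos (hterm α) hprod, (hsum.div_const _).tsum_eq.trans (div_self hprod.ne')⟩
end
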